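/- arXiv:1211.0328 — 5 statements merged into one kernel-verified Lean document; each statement's English description precedes it below -/
import Mathlib

section
/- Let k be a positive integer and L = {0, 1, …, k−1}. Then for every finite simple graph G that admits an L-intersection representation, Θ_L(G^c) ≥ (Θ_1(G))^{1/k}, i.e. Θ_L(G^c)^k ≥ Θ_1(G). -/
/-- An `L`-intersection representation of `G` with universe `{1,…,l}` (modeled as `Fin l`):
two distinct vertices are adjacent iff the size of the intersection of their sets lies in `L`. -/
def IsLRep {V : Type*} {l : ℕ} (G : SimpleGraph V) (L : Set ℕ) (A : V → Finset (Fin l)) : Prop :=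
  ∀ u v : V, u ≠ v → (G.Adj u v ↔ (A u ∩ A v).card ∈ L)

/-- `G` has an `L`-intersection representation on a universe of size `l`. -/
def HasLRep {V : Type*} (G : SimpleGraph V) (L : Set ℕ) (l : ℕ) : Prop :=
  ∃ A : V → Finset (Fin l), IsLRep G L A

/-- The `L`-intersection number `Θ_L(G)`: the smallest size of a universe admitting an
`L`-intersection representation of `G`. -/
noncomputable def thetaL {V : Type*} (G : SimpleGraph V) (L : Set ℕ) : ℕ :=
  sInf {l | HasLRep G L l}

/-- Every finite graph admits a `{m | m < k}`-intersection representation (for `k > 0`). -/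
lemma exists_rep_lt {V : Type*} [Fintype V] (k : ℕ) (hk : 0 < k) (H : SimpleGraph V) :
    ∃ l, HasLRep H {m : ℕ | m < k} l := by
  classical
  refine ⟨Fintype.card (Fin k × V × V), ?_⟩
  set e := Fintype.equivFin (Fin k × V × V) with he
  set S : V → Finset (Fin k × V × V) := fun v =>
    Finset.univ.filter
      (fun p => ¬ H.Adj p.2.1 p.2.2 ∧ p.2.1 ≠ p.2.2 ∧ (v = p.2.1 ∨ v = p.2.2)) with hSdef
  refine ⟨fun v => (S v).map e.toEmbedding, fun u v huv => ?_⟩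
  have hmap : ((S u).map e.toEmbedding ∩ (S v).map e.toEmbedding)
      = (S u ∩ S v).map e.toEmbedding := by rw [← Finset.map_inter]
  rw [hmap, Finset.card_map]
  by_cases hadj : H.Adj u v
  · have hempty : S u ∩ S v = ∅ := by
      rw [Finset.eq_empty_iff_forall_notMem]
      rintro ⟨i, a, b⟩ hp
      simp only [hSdef, Finset.mem_inter, Finset.mem_filter] at hp
      obtain ⟨⟨-, hna, hab, hu⟩, ⟨-, -, -, hv⟩⟩ := hp
      rcases hu with rfl | rfl <;> rcases hv with rfl | rfl
      · exact huv rfl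
      · exact hna hadj
      · exact hna hadj.symm
      · exact huv rfl
    rw [hempty]
    simpa using ⟨fun _ => hk, fun _ => hadj⟩
  · have hsub : Finset.image (fun i : Fin k => (i, u, v)) Finset.univ ⊆ S u ∩ S v := by
      intro p hp
      simp only [Finset.mem_image] at hp
      obtain ⟨i, -, rfl⟩ := hp
      simp [hSdef, hadj, huv]
    have hcard : k ≤ (S u ∩ S v).card := by
      have h1 := Finset.card_le_card hsub
      rwa [Finset.card_image_of_injective _ (fun i j h => by injection h),
        Finset.card_fin] at h1
    exact iff_of_false hadj (by simp only [Set.mem_setOf_eq, not_lt]; exact hcard)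

/-- For `k ≥ 1` and `L = {0,1,…,k-1}`, every finite simple graph `G`
admitting an `L`-intersection representation satisfies `Θ_L(Gᶜ)^k ≥ Θ_1(G)`,
where `Θ_1` is the `L`-intersection number for `L = {1,2,3,…}`. -/
theorem thetaL_compl_pow_ge_theta_one {V : Type*} [Fintype V]
    (k : ℕ) (hk : 0 < k) (L : Set ℕ) (hL : L = {m : ℕ | m < k})
    (G : SimpleGraph V) (hrep : ∃ l, HasLRep G L l) :
    thetaL G {m : ℕ | 0 < m} ≤ (thetaL Gᶜ L) ^ k := by
  classical
  subst hL
  clear hrep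
  have hne : {l | HasLRep Gᶜ {m : ℕ | m < k} l}.Nonempty := exists_rep_lt k hk Gᶜ
  have hmem : HasLRep Gᶜ {m : ℕ | m < k} (thetaL Gᶜ {m : ℕ | m < k}) := Nat.sInf_mem hne
  set l := thetaL Gᶜ {m : ℕ | m < k} with hl
  obtain ⟨A, hA⟩ := hmem
  have hcardfun : Fintype.card (Fin k → Fin l) = l ^ k := by simp
  set e := Fintype.equivFinOfCardEq hcardfun with he
  set B : V → Finset (Fin (l ^ k)) := fun v =>
    (Finset.univ.filter (fun g : Fin k → Fin l => StrictMono g ∧ ∀ i, g i ∈ A v)).map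
      e.toEmbedding with hBdef
  have hrepG : HasLRep G {m : ℕ | 0 < m} (l ^ k) := by
    refine ⟨B, fun u v huv => ?_⟩
    have hAc := hA u v huv
    simp only [Set.mem_setOf_eq] at hAc
    have h1 : ¬ G.Adj u v ↔ (A u ∩ A v).card < k := by
      rw [← hAc]
      simp [SimpleGraph.compl_adj, huv]
    have hG : G.Adj u v ↔ k ≤ (A u ∩ A v).card := by
      rw [← not_lt, ← h1, not_not]
    rw [hG]
    simp only [Set.mem_setOf_eq, Finset.card_pos]
    constructor
    · intro hle
      obtain ⟨t, hts, htk⟩ := Finset.exists_subset_card_eq hle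
      refine ⟨e (t.orderEmbOfFin htk), ?_⟩
      have hmm : ∀ w, t ⊆ A w →
          e (⇑(t.orderEmbOfFin htk)) ∈ B w := by
        intro w hw
        simp only [hBdef, Finset.mem_map_equiv, Equiv.symm_apply_apply, Finset.mem_filter,
          Finset.mem_univ, true_and]
        exact ⟨(t.orderEmbOfFin htk).strictMono,
          fun i => hw (t.orderEmbOfFin_mem htk i)⟩
      have hts' : t ⊆ A u ∩ A v := hts
      rw [Finset.mem_inter]
      exact ⟨hmm u (fun x hx => (Finset.mem_inter.mp (hts' hx)).1),
        hmm v (fun x hx => (Finset.mem_inter.mp (hts' hx)).2)⟩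
    · rintro ⟨x, hx⟩
      rw [Finset.mem_inter] at hx
      obtain ⟨hxu, hxv⟩ := hx
      simp only [hBdef, Finset.mem_map_equiv, Finset.mem_filter, Finset.mem_univ,
        true_and] at hxu hxv
      obtain ⟨hsm, hu⟩ := hxu
      obtain ⟨-, hv⟩ := hxv
      have hsub : Finset.image (e.symm x) Finset.univ ⊆ A u ∩ A v := by
        intro y hy
        simp only [Finset.mem_image] at hy
        obtain ⟨i, -, rfl⟩ := hy
        exact Finset.mem_inter.mpr ⟨hu i, hv i⟩
      have := Finset.card_le_card hsub
      rwa [Finset.card_image_of_injective _ hsm.injective, Finset.card_fin] at this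
  exact Nat.sInf_le hrepG
end

section
/- Let F be a family of k-subsets of {0, 1, …, l} and let i, t be non-negative integers. Then the matrix product I(F, i) × I(i, t) equals C(k−t, i−t) · I(F, t), where C(·,·) is the binomial coefficient (interpreted as 0 when i−t < 0 or i−t > k−t). -/
open Finset


/-- The inclusion matrix `I(ℱ, t)` of a family `ℱ` of subsets of `{0,1,…,l}` (modeled as
`Fin (l+1)`): rows are indexed by the members of `ℱ`, columns by the `t`-subsets of
`{0,…,l}`, and the `(S, T)` entry is `1` iff `T ⊆ S`. -/
def inclMatF {l : ℕ} (ℱ : Finset (Finset (Fin (l + 1)))) (t : ℕ) :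
    Matrix {S // S ∈ ℱ} {T : Finset (Fin (l + 1)) // T.card = t} ℤ :=
  fun S T => if T.val ⊆ S.val then 1 else 0

/-- The inclusion matrix `I(i, t)`: rows indexed by the `i`-subsets of `{0,…,l}`, columns by
the `t`-subsets, with `(S, T)` entry `1` iff `T ⊆ S`. -/
def inclMat (l i t : ℕ) :
    Matrix {S : Finset (Fin (l + 1)) // S.card = i} {T : Finset (Fin (l + 1)) // T.card = t} ℤ :=
  fun S T => if T.val ⊆ S.val then 1 else 0

lemma count_between {α : Type*} [DecidableEq α] [Fintype α] (S T : Finset α) (hTS : T ⊆ S)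
    (i : ℕ) (hti : T.card ≤ i) :
    (univ.filter fun A : Finset α => A.card = i ∧ A ⊆ S ∧ T ⊆ A).card
      = (S.card - T.card).choose (i - T.card) := by
  rw [← card_sdiff_of_subset hTS, ← card_powersetCard (i - T.card) (S \ T)]
  apply Finset.card_bij' (fun A _ => A \ T) (fun B _ => B ∪ T)
  · intro A hA
    simp only [mem_filter, mem_univ, true_and] at hA
    rw [mem_powersetCard]
    constructor
    · intro x hx
      simp only [mem_sdiff] at hx ⊢
      exact ⟨hA.2.1 hx.1, hx.2⟩
    · rw [card_sdiff_of_subset hA.2.2, hA.1]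
  · intro B hB
    rw [mem_powersetCard] at hB
    have hd : Disjoint B T := disjoint_of_subset_left hB.1 (sdiff_disjoint)
    simp only [mem_filter, mem_univ, true_and]
    refine ⟨?_, ?_, subset_union_right⟩
    · rw [card_union_of_disjoint hd, hB.2]
      omega
    · exact union_subset (hB.1.trans sdiff_subset) hTS
  · intro A hA
    simp only [mem_filter, mem_univ, true_and] at hA
    exact sdiff_union_of_subset hA.2.2
  · intro B hB
    rw [mem_powersetCard] at hB
    have hd : Disjoint B T := disjoint_of_subset_left hB.1 (sdiff_disjoint)
    exact union_sdiff_cancel_right hd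

/-- If `ℱ` is a family of `k`-subsets of `{0,1,…,l}`, then
`I(ℱ, i) × I(i, t) = C(k−t, i−t) · I(ℱ, t)`, where the binomial coefficient is interpreted
as `0` when `i − t < 0` or `i − t > k − t`. -/
theorem inclMat_mul_inclMat {l : ℕ} (ℱ : Finset (Finset (Fin (l + 1)))) (k i t : ℕ)
    (hk : ∀ S ∈ ℱ, S.card = k) :
    inclMatF ℱ i * inclMat l i t =
      (if t ≤ i ∧ i ≤ k then ((k - t).choose (i - t) : ℤ) else 0) • inclMatF ℱ t := by
  classical
  ext S T
  rw [Matrix.mul_apply, Matrix.smul_apply]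
  have hS : S.val.card = k := hk S.val S.prop
  have hT : T.val.card = t := T.prop
  simp only [inclMatF, inclMat]
  have key : ∑ A : {A : Finset (Fin (l+1)) // A.card = i},
      (if A.val ⊆ S.val then (1:ℤ) else 0) * (if T.val ⊆ A.val then 1 else 0)
      = ((univ.filter fun A : Finset (Fin (l+1)) =>
          A.card = i ∧ A ⊆ S.val ∧ T.val ⊆ A).card : ℤ) := by
    rw [← Finset.sum_subtype (univ.filter fun A : Finset (Fin (l+1)) => A.card = i) (by simp)
      (fun A => (if A ⊆ S.val then (1:ℤ) else 0) * (if T.val ⊆ A then 1 else 0))]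
    rw [show (univ.filter fun A : Finset (Fin (l+1)) => A.card = i ∧ A ⊆ S.val ∧ T.val ⊆ A)
        = (univ.filter fun A : Finset (Fin (l+1)) => A.card = i).filter
            (fun A => A ⊆ S.val ∧ T.val ⊆ A) by rw [Finset.filter_filter]]
    rw [Finset.card_filter]
    push_cast
    refine Finset.sum_congr rfl fun A _ => ?_
    by_cases h1 : A ⊆ S.val <;> by_cases h2 : T.val ⊆ A <;> simp [h1, h2]
  rw [key]
  by_cases hTS : T.val ⊆ S.val
  · simp only [hTS, if_true, smul_eq_mul, mul_one]
    by_cases h : t ≤ i ∧ i ≤ k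
    · rw [if_pos h, count_between S.val T.val hTS i (hT.le.trans h.1), hS, hT]
    · rw [if_neg h]
      norm_cast
      rw [Finset.card_eq_zero, Finset.filter_eq_empty_iff]
      intro A _
      rintro ⟨h1, h2, h3⟩
      have c1 := Finset.card_le_card h3
      have c2 := Finset.card_le_card h2
      omega
  · simp only [hTS, if_false, smul_eq_mul, mul_zero]
    norm_cast
    rw [Finset.card_eq_zero, Finset.filter_eq_empty_iff]
    intro A _
    rintro ⟨-, h2, h3⟩
    exact hTS (h3.trans h2)
end

section
/- Let p be a prime and R a set of residues modulo p with |R| = s ≥ 1, and let L = {l ≥ 0 : l mod p ∈ R}. Then for every finite simple graph G that admits an L-intersection representation, mr_{ℤ_p}(G^c) ≤ Σ_{t=0}^{s} C(Θ_L(G), t). -/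
/-- The minimum rank of a graph `G` over a field `F`: the minimum rank of a symmetric matrix
over `F` whose off-diagonal entries are nonzero exactly at the edges of `G`
(diagonal entries are arbitrary). -/
noncomputable def minRank (F : Type*) [Field F] {V : Type*} [Fintype V] (G : SimpleGraph V) : ℕ :=
  sInf {r | ∃ A : Matrix V V F, A.IsSymm ∧
    (∀ u v : V, u ≠ v → (A u v ≠ 0 ↔ G.Adj u v)) ∧ A.rank = r}

/-!
Take a representation `A` on `Θ = Θ_L(G)` points and `q = ∏_{r ∈ R} (X - r)`. The matrix
`M u v = q(|A u ∩ A v|)` over `ℤ_p` vanishes off the diagonal exactly at the edges of `G`, so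
it is admissible for `Gᶜ`. Newton's forward-difference formula gives
`q(n) = ∑_{t ≤ s} c_t C(n, t)`, and `C(|A u ∩ A v|, t)` counts the `t`-sets contained in both
`A u` and `A v`. Hence `M = (W diag c) Wᵀ`, where `W` is the inclusion matrix of vertices
against sets of size `≤ s`, and `rank M ≤ ∑_{t ≤ s} C(Θ, t)`.
-/

open Finset Polynomial Matrix

theorem Polynomial.eval_natCast_eq_sum_choose_smul {R : Type*} [CommRing R] {q : R[X]} {d : ℕ}
    (hq : q.natDegree ≤ d) (n : ℕ) :
    q.eval (n : R) = ∑ k ∈ range (d + 1), n.choose k • (fwdDiff 1)^[k] q.eval 0 := by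
  have newton := shift_eq_sum_fwdDiff_iter 1 q.eval n 0
  rw [zero_add, nsmul_one] at newton
  rw [newton, sum_subset (range_subset_range.2 (by omega : n + 1 ≤ n + d + 1)),
    ← sum_subset (range_subset_range.2 (by omega : d + 1 ≤ n + d + 1))]
  · intro k _ hk
    rw [fwdDiff_iter_eq_zero_of_degree_lt (by simp at hk; omega), Pi.zero_apply, smul_zero]
  · intro k _ hk
    rw [Nat.choose_eq_zero_of_lt (by simp at hk; omega), zero_smul]

theorem Polynomial.eval_prod_X_sub_C_eq_zero_iff {R : Type*} [CommRing R] [IsDomain R]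
    (s : Finset R) (x : R) : (∏ r ∈ s, (X - C r)).eval x = 0 ↔ x ∈ s := by
  simp [eval_prod, prod_eq_zero_iff, sub_eq_zero]

theorem Finset.filter_subset_powersetCard {α : Type*} [DecidableEq α] (X Y : Finset α) (t : ℕ) :
    {S ∈ powersetCard t Y | S ⊆ X} = powersetCard t (Y ∩ X) := by
  ext S
  simp [mem_powersetCard, subset_inter_iff, and_comm, and_left_comm]

theorem Matrix.rank_le_sum_choose_of_apply_eq_sum_choose_card_inter
    {F V α : Type*} [CommRing F] [StrongRankCondition F] [Fintype V] [Fintype α] [DecidableEq α]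
    (A : V → Finset α) (d : ℕ) (c : ℕ → F) (M : Matrix V V F)
    (hM : ∀ u v, M u v = ∑ t ∈ range (d + 1), (A u ∩ A v).card.choose t • c t) :
    M.rank ≤ ∑ t ∈ range (d + 1), (Fintype.card α).choose t := by
  let ι := (range (d + 1)).sigma fun t => powersetCard t (univ : Finset α)
  let W : Matrix V ι F := of fun u i => if i.1.2 ⊆ A u then 1 else 0
  let cW : Matrix V ι F := of fun u i => c i.1.1 * W u i
  have hM_eq : M = cW * Wᵀ := by
    ext u v
    simp only [mul_apply, transpose_apply, cW, W, of_apply]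
    rw [hM, sum_coe_sort ι (fun i =>
      c i.1 * (if i.2 ⊆ A u then 1 else 0) * if i.2 ⊆ A v then 1 else 0), sum_sigma]
    refine sum_congr rfl fun t _ => ?_
    rw [← card_powersetCard, ← univ_inter (A u ∩ A v), ← filter_subset_powersetCard, ← sum_const,
      sum_filter]
    refine sum_congr rfl fun S _ => ?_
    by_cases hu : S ⊆ A u <;> by_cases hv : S ⊆ A v <;> simp [hu, hv, subset_inter_iff]
  calc M.rank ≤ Fintype.card ι := by
        rw [hM_eq]
        exact (rank_mul_le_left _ _).trans (rank_le_card_width _)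
    _ = _ := by simp [ι, card_sigma]

theorem minRank_le_rank {F V : Type*} [Field F] [Fintype V] {G : SimpleGraph V}
    (M : Matrix V V F) (hsymm : M.IsSymm) (hM : ∀ u v : V, u ≠ v → (M u v ≠ 0 ↔ G.Adj u v)) :
    minRank F G ≤ M.rank :=
  Nat.sInf_le ⟨M, hsymm, hM, rfl⟩

theorem minRank_compl_le_sum_choose_general {V : Type*} [Fintype V]
    (p : ℕ) [hp : Fact p.Prime] (R : Finset (ZMod p)) (s : ℕ) (hR : R.card = s)
    (L : Set ℕ) (hL : L = {m : ℕ | (m : ZMod p) ∈ R})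
    (G : SimpleGraph V) (hrep : ∃ l, HasLRep G L l) :
    minRank (ZMod p) Gᶜ ≤ ∑ t ∈ Finset.range (s + 1), (thetaL G L).choose t := by
  obtain ⟨A, hA⟩ : HasLRep G L (thetaL G L) := Nat.sInf_mem hrep
  let q : (ZMod p)[X] := ∏ r ∈ R, (X - C r)
  have hq : q.natDegree ≤ s := by rw [natDegree_finsetProd_X_sub_C_eq_card, hR]
  let M : Matrix V V (ZMod p) := of fun u v => q.eval ((A u ∩ A v).card : ZMod p)
  have hsymm : M.IsSymm := by
    ext u v
    simp only [M, transpose_apply, of_apply, inter_comm]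
  have hM : ∀ u v, u ≠ v → (M u v ≠ 0 ↔ Gᶜ.Adj u v) := by
    intro u v huv
    simp only [M, q, of_apply, ne_eq, eval_prod_X_sub_C_eq_zero_iff, SimpleGraph.compl_adj,
      hA u v huv, hL, Set.mem_ofPred_eq, huv, not_false_eq_true, true_and]
  calc minRank (ZMod p) Gᶜ ≤ M.rank := minRank_le_rank M hsymm hM
    _ ≤ _ := by
      simpa using rank_le_sum_choose_of_apply_eq_sum_choose_card_inter A s _ M
        fun u v => eval_natCast_eq_sum_choose_smul hq _

/-- Let `p` be a prime, `R` a set of residues mod `p` with `|R| = s ≥ 1`, and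
`L = {l ≥ 0 : l mod p ∈ R}`. Then every finite simple graph `G` admitting an `L`-intersection
representation satisfies `mr_{ℤ_p}(Gᶜ) ≤ Σ_{t=0}^{s} C(Θ_L(G), t)`. -/
theorem minRank_compl_le_sum_choose {V : Type*} [Fintype V]
    (p : ℕ) [hp : Fact p.Prime] (R : Finset (ZMod p)) (s : ℕ) (hs : 1 ≤ s) (hR : R.card = s)
    (L : Set ℕ) (hL : L = {m : ℕ | (m : ZMod p) ∈ R})
    (G : SimpleGraph V) (hrep : ∃ l, HasLRep G L l) :
    minRank (ZMod p) Gᶜ ≤ ∑ t ∈ Finset.range (s + 1), (thetaL G L).choose t :=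
  minRank_compl_le_sum_choose_general p (hp := hp) R s hR L hL G hrep
end

section
/- Let p be a prime and R a set of residues modulo p with |R| = s ≥ 1, and let L = {l ≥ 0 : l mod p ∈ R}. Then for every finite simple graph G that admits an L-intersection representation, mr_{ℤ_p}(G) ≤ Σ_{t=0}^{p−1} C(Θ_L(G), t). -/
section newton
variable {p : ℕ} [hp : Fact p.Prime]

lemma fwdDiff_iter_zero (h : ℕ → ZMod p) (hper : ∀ m, h (m + p) = h m) (y : ℕ) :
    (fwdDiff 1)^[p] h y = 0 := by
  rw [fwdDiff_iter_eq_sum_shift]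
  rw [Finset.sum_range_succ]
  have hmid : ∀ k ∈ Finset.range p, k ≠ 0 →
      ((-1 : ℤ) ^ (p - k) * (p.choose k : ℤ)) • h (y + k • 1) = 0 := by
    intro k hk hk0
    rw [Finset.mem_range] at hk
    have hdvd : (p : ℕ) ∣ p.choose k := Nat.Prime.dvd_choose_self hp.out hk0 hk
    have : ((p.choose k : ℕ) : ZMod p) = 0 := by
      exact_mod_cast (ZMod.natCast_eq_zero_iff _ _).mpr hdvd
    rw [zsmul_eq_mul]
    push_cast
    rw [this]
    ring
  rw [Finset.sum_eq_single_of_mem 0 (Finset.mem_range.mpr hp.out.pos) (fun k hk h0 => hmid k hk h0)]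
  have h1 : ((-1 : ℤ) ^ (p - 0) * (p.choose 0 : ℤ)) • h (y + 0 • 1) = - h y := by
    simp only [Nat.sub_zero, Nat.choose_zero_right, Nat.cast_one, mul_one, zero_smul, add_zero]
    rw [zsmul_eq_mul]
    push_cast
    rw [neg_one_pow_char (ZMod p) p]
    ring
  have h2 : ((-1 : ℤ) ^ (p - p) * (p.choose p : ℤ)) • h (y + p • 1) = h y := by
    simp only [Nat.sub_self, pow_zero, Nat.choose_self, Nat.cast_one, one_mul, one_smul,
      smul_eq_mul, mul_one]
    exact hper y
  rw [h1, h2]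
  ring

lemma fwdDiff_iter_zero' (h : ℕ → ZMod p) (hper : ∀ m, h (m + p) = h m) {t : ℕ} (ht : p ≤ t)
    (y : ℕ) : (fwdDiff 1)^[t] h y = 0 := by
  obtain ⟨k, rfl⟩ := Nat.exists_eq_add_of_le ht
  rw [add_comm, Function.iterate_add_apply]
  have hz : (fwdDiff 1)^[p] h = (fun _ => (0 : ZMod p)) := funext (fwdDiff_iter_zero h hper)
  rw [hz]
  have : fwdDiff (1 : ℕ) (fun _ => (0 : ZMod p)) = (fun _ => (0 : ZMod p)) := by
    funext m; simp [fwdDiff]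
  rw [Function.iterate_fixed this]

lemma newton_formula (h : ℕ → ZMod p) (hper : ∀ m, h (m + p) = h m) (m : ℕ) :
    h m = ∑ t ∈ Finset.range p, (m.choose t : ZMod p) * (fwdDiff 1)^[t] h 0 := by
  have key := shift_eq_sum_fwdDiff_iter (1 : ℕ) h m 0
  simp only [zero_add, smul_eq_mul, mul_one] at key
  set N := max (m + 1) p with hN
  simp only [nsmul_eq_mul] at key
  have e1 : ∑ t ∈ Finset.range (m + 1), (m.choose t : ZMod p) * (fwdDiff 1)^[t] h 0
      = ∑ t ∈ Finset.range N, (m.choose t : ZMod p) * (fwdDiff 1)^[t] h 0 := by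
    apply Finset.sum_subset (Finset.range_subset_range.mpr (le_max_left _ _))
    intro t _ ht
    rw [Finset.mem_range, not_lt] at ht
    rw [Nat.choose_eq_zero_of_lt ht]
    simp
  have e2 : ∑ t ∈ Finset.range p, (m.choose t : ZMod p) * (fwdDiff 1)^[t] h 0
      = ∑ t ∈ Finset.range N, (m.choose t : ZMod p) * (fwdDiff 1)^[t] h 0 := by
    apply Finset.sum_subset (Finset.range_subset_range.mpr (le_max_right _ _))
    intro t _ ht
    rw [Finset.mem_range, not_lt] at ht
    rw [fwdDiff_iter_zero' h hper ht]
    ring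
  rw [e2, ← e1]
  exact key

end newton

/-- Let `p` be a prime, `R` a set of residues mod `p` with `|R| = s ≥ 1`, and
`L = {l ≥ 0 : l mod p ∈ R}`. Then every finite simple graph `G` admitting an `L`-intersection
representation satisfies `mr_{ℤ_p}(G) ≤ Σ_{t=0}^{p−1} C(Θ_L(G), t)`. -/
theorem minRank_le_sum_choose {V : Type*} [Fintype V]
    (p : ℕ) [hp : Fact p.Prime] (R : Finset (ZMod p)) (s : ℕ) (hs : 1 ≤ s) (hR : R.card = s)
    (L : Set ℕ) (hL : L = {m : ℕ | (m : ZMod p) ∈ R})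
    (G : SimpleGraph V) (hrep : ∃ l, HasLRep G L l) :
    minRank (ZMod p) G ≤ ∑ t ∈ Finset.range p, (thetaL G L).choose t := by
  classical
  set n := thetaL G L with hn
  have hne : {l | HasLRep G L l}.Nonempty := hrep
  obtain ⟨A, hA⟩ : HasLRep G L n := Nat.sInf_mem hne
  set h : ℕ → ZMod p := fun m => if (m : ZMod p) ∈ R then 1 else 0 with hh
  have hper : ∀ m, h (m + p) = h m := by
    intro m
    have : ((m + p : ℕ) : ZMod p) = (m : ZMod p) := by push_cast [ZMod.natCast_self]; ring
    simp only [hh, this]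
  set b : ℕ → ZMod p := fun t => (fwdDiff 1)^[t] h 0 with hb
  let K := (t : Fin p) × {S : Finset (Fin n) // S ∈ Finset.powersetCard t.1 (Finset.univ : Finset (Fin n))}
  let P : Matrix V K (ZMod p) := fun v k => if (k.2 : Finset (Fin n)) ⊆ A v then 1 else 0
  let Q : Matrix K V (ZMod p) := fun k v =>
    (if (k.2 : Finset (Fin n)) ⊆ A v then 1 else 0) * b k.1
  set M := P * Q with hMdef
  have hM : ∀ u v : V, M u v = h ((A u ∩ A v).card) := by
    intro u v
    rw [hMdef, Matrix.mul_apply]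
    rw [← Finset.univ_sigma_univ, Finset.sum_sigma]
    have inner : ∀ t : Fin p,
        ∑ S : {S : Finset (Fin n) // S ∈ Finset.powersetCard t.1 (Finset.univ : Finset (Fin n))},
          P u ⟨t, S⟩ * Q ⟨t, S⟩ v
        = (((A u ∩ A v).card.choose t : ℕ) : ZMod p) * b t := by
      intro t
      have : ∀ S : {S : Finset (Fin n) // S ∈ Finset.powersetCard t.1 (Finset.univ : Finset (Fin n))},
          P u ⟨t, S⟩ * Q ⟨t, S⟩ v
          = (fun S₀ : Finset (Fin n) => if S₀ ⊆ A u ∩ A v then b t else 0) (S : Finset (Fin n)) := by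
        intro S
        simp only [P, Q]
        by_cases h1 : (S : Finset (Fin n)) ⊆ A u <;> by_cases h2 : (S : Finset (Fin n)) ⊆ A v <;>
          simp [h1, h2, Finset.subset_inter_iff]
      rw [Finset.sum_congr rfl (fun S _ => this S)]
      rw [Finset.sum_coe_sort (Finset.powersetCard (t : ℕ) (Finset.univ : Finset (Fin n)))
        (fun S₀ => if S₀ ⊆ A u ∩ A v then b t else 0)]
      rw [← Finset.sum_filter]
      have hfil : (Finset.powersetCard (t : ℕ) (Finset.univ : Finset (Fin n))).filter
          (fun S => S ⊆ A u ∩ A v) = Finset.powersetCard (t : ℕ) (A u ∩ A v) := by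
        ext S
        simp only [Finset.mem_filter, Finset.mem_powersetCard, Finset.subset_univ, true_and]
        tauto
      rw [hfil, Finset.sum_const, Finset.card_powersetCard, nsmul_eq_mul]
    rw [Finset.sum_congr rfl (fun t _ => inner t)]
    rw [Fin.sum_univ_eq_sum_range (fun t => (((A u ∩ A v).card.choose t : ℕ) : ZMod p) * b t) p]
    exact (newton_formula h hper _).symm
  have hsymm : M.IsSymm := by
    rw [Matrix.IsSymm]
    ext u v
    rw [Matrix.transpose_apply, hM, hM, Finset.inter_comm]
  have hpat : ∀ u v : V, u ≠ v → (M u v ≠ 0 ↔ G.Adj u v) := by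
    intro u v huv
    rw [hM, (hA u v huv), hL]
    simp only [hh, Set.mem_setOf_eq]
    by_cases hc : (((A u ∩ A v).card : ℕ) : ZMod p) ∈ R <;> simp [hc]
  have hle1 : minRank (ZMod p) G ≤ M.rank := Nat.sInf_le ⟨M, hsymm, hpat, rfl⟩
  have hcard : Fintype.card K = ∑ t ∈ Finset.range p, n.choose t := by
    rw [Fintype.card_sigma]
    have : ∀ t : Fin p,
        Fintype.card {S : Finset (Fin n) // S ∈ Finset.powersetCard t.1 (Finset.univ : Finset (Fin n))}
        = n.choose t := by
      intro t
      rw [Fintype.card_coe, Finset.card_powersetCard, Finset.card_univ, Fintype.card_fin]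
    rw [Finset.sum_congr rfl (fun t _ => this t)]
    exact Fin.sum_univ_eq_sum_range (fun t => n.choose t) p
  have hle2 : M.rank ≤ Fintype.card K := by
    rw [hMdef]
    exact le_trans (Matrix.rank_mul_le_left P Q) (Matrix.rank_le_card_width P)
  omega
end

section
/- Let p be a prime and R a set of residues modulo p with |R| = s ≥ 1, let L = {l ≥ 0 : l mod p ∈ R}, and let k be an integer with k ≥ s. Then for every finite simple graph G that admits a k-uniform L-intersection representation, mr_{ℤ_p}(G^c) ≤ C(Θ_{L,k}(G), s). -/
/-- `G` has a `k`-uniform `L`-intersection representation with `l` labels: in addition every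
assigned set has size exactly `k`. -/
def HasUnifLRep {V : Type*} (G : SimpleGraph V) (L : Set ℕ) (k l : ℕ) : Prop :=
  ∃ A : V → Finset (Fin l), (∀ v, (A v).card = k) ∧ IsLRep G L A

/-- The `(L,k)`-intersection number `Θ_{L,k}(G)`: the least universe size of a `k`-uniform
`L`-intersection representation of `G`. -/
noncomputable def thetaLk {V : Type*} (G : SimpleGraph V) (L : Set ℕ) (k : ℕ) : ℕ :=
  sInf {l | HasUnifLRep G L k l}

/-!
Let `A` be an optimal `k`-uniform `L`-representation of `G` on `Θ = Θ_{L,k}(G)` points. The matrix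
`B u v = ∏_{r ∈ R} (|A u ∩ A v| - r)` over `ℤ_p` is symmetric, and off the diagonal it vanishes
exactly at the edges of `G`, so it witnesses `mr_{ℤ_p}(Gᶜ) ≤ rank B`.

`B` is the reduction of an integer matrix, and reduction mod `p` does not increase rank: a rational
dependence between rows can be scaled to an integral one that is nonzero mod `p`. Over `ℚ`, the
degree-`s` polynomial `∏ (x - r)` is a combination of the binomials `C(x, t)`, `t ≤ s`, and
`C(|A u ∩ A v|, t)` is the `(u, v)` entry of `W_t W_tᵀ` for the inclusion matrix `W_t` of the sets
`A v` against the `t`-subsets. By `k`-uniformity `W_s W_{s,t} = C(k - t, s - t) W_t`, with a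
coefficient that is invertible in characteristic zero (though possibly not mod `p`), so all these
matrices factor through `W_s`, which has `C(Θ, s)` columns.
-/

open Finset Matrix

section BinomialSpan

variable (R : Type*) [CommRing R]

noncomputable def binomialSpan (n : ℕ) : Submodule R (ℕ → R) :=
  Submodule.span R ((fun t (m : ℕ) => (m.choose t : R)) '' Set.Iic n)

variable {R}

lemma choose_mem_binomialSpan {t n : ℕ} (h : t ≤ n) :
    (fun m : ℕ => (m.choose t : R)) ∈ binomialSpan R n :=
  Submodule.subset_span ⟨t, h, rfl⟩

lemma cast_sub_mul_choose (m t : ℕ) :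
    ((m : R) - t) * m.choose t = (t + 1) * m.choose (t + 1) := by
  rcases le_or_gt t m with h | h
  · have := congrArg (Nat.cast : ℕ → R) (Nat.choose_succ_right_eq m t)
    push_cast [Nat.cast_sub h] at this
    linear_combination -this
  · simp [Nat.choose_eq_zero_of_lt h, Nat.choose_eq_zero_of_lt (h.trans (Nat.lt_succ_self t))]

lemma mul_sub_mem_binomialSpan {n : ℕ} {g : ℕ → R} (hg : g ∈ binomialSpan R n) (a : R) :
    (fun m : ℕ => ((m : R) - a) * g m) ∈ binomialSpan R (n + 1) := by
  suffices binomialSpan R n ≤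
      (binomialSpan R (n + 1)).comap (LinearMap.mulLeft R fun m : ℕ => (m : R) - a) from this hg
  refine Submodule.span_le.2 ?_
  rintro _ ⟨t, ht, rfl⟩
  have ht : t ≤ n := ht
  have hsplit : (fun m : ℕ => ((m : R) - a) * m.choose t) =
      ((t : R) + 1) • (fun m : ℕ => (m.choose (t + 1) : R)) +
        ((t : R) - a) • fun m : ℕ => (m.choose t : R) := by
    funext m
    simp only [Pi.add_apply, Pi.smul_apply, smul_eq_mul]
    linear_combination cast_sub_mul_choose (R := R) m t
  change (fun m : ℕ => ((m : R) - a) * m.choose t) ∈ binomialSpan R (n + 1)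
  rw [hsplit]
  exact add_mem (Submodule.smul_mem _ _ (choose_mem_binomialSpan (by omega)))
    (Submodule.smul_mem _ _ (choose_mem_binomialSpan (by omega)))

lemma prod_sub_mem_binomialSpan {ι : Type*} (F : Finset ι) (a : ι → R) :
    (fun m : ℕ => ∏ i ∈ F, ((m : R) - a i)) ∈ binomialSpan R #F := by
  classical
  induction F using Finset.induction_on with
  | empty => simpa using choose_mem_binomialSpan (R := R) (t := 0) le_rfl
  | insert i F hi ih =>
    simp_rw [prod_insert hi, card_insert_of_notMem hi]
    exact mul_sub_mem_binomialSpan ih (a i)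

end BinomialSpan

lemma Finset.card_filter_superset_powersetCard {α : Type*} [DecidableEq α] {T X : Finset α}
    {s : ℕ} (hTX : T ⊆ X) (hs : #T ≤ s) :
    #{S ∈ powersetCard s X | T ⊆ S} = (#X - #T).choose (s - #T) := by
  rw [← card_sdiff_of_subset hTX, ← card_powersetCard]
  refine card_nbij' (· \ T) (· ∪ T) ?_ ?_ ?_ ?_
  · intro S hS
    simp only [mem_coe, mem_filter, mem_powersetCard] at hS ⊢
    exact ⟨sdiff_subset_sdiff hS.1.1 le_rfl, by rw [card_sdiff_of_subset hS.2, hS.1.2]⟩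
  · intro U hU
    simp only [mem_coe, mem_filter, mem_powersetCard, subset_sdiff] at hU ⊢
    refine ⟨⟨union_subset hU.1.1 hTX, ?_⟩, subset_union_right⟩
    rw [card_union_of_disjoint hU.1.2, hU.2]
    omega
  · intro S hS
    simp only [mem_coe, mem_filter] at hS
    exact sdiff_union_of_subset hS.2
  · intro U hU
    simp only [mem_coe, mem_powersetCard, subset_sdiff] at hU
    exact union_sdiff_cancel_right hU.1.2

lemma Fintype.sum_subtype_card_eq {α M : Type*} [Fintype α] [AddCommMonoid M] (t : ℕ)
    (f : Finset α → M) :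
    ∑ T : {T : Finset α // #T = t}, f T = ∑ T ∈ powersetCard t univ, f T :=
  (sum_subtype _ (fun _ => mem_powersetCard_univ) f).symm

section IntersectionMatrix

variable {V α : Type*} [DecidableEq α]

def intersectionMatrix {R : Type*} (A : V → Finset α) (g : ℕ → R) : Matrix V V R :=
  of fun u v => g #(A u ∩ A v)

lemma isSymm_intersectionMatrix {R : Type*} (A : V → Finset α) (g : ℕ → R) :
    (intersectionMatrix A g).IsSymm := by
  ext u v
  simp only [intersectionMatrix, transpose_apply, of_apply, inter_comm]

theorem minRank_compl_le_rank_intersectionMatrix [Fintype V] {F : Type*} [Field F] {l : ℕ}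
    {G : SimpleGraph V} {L : Set ℕ} {A : V → Finset (Fin l)} (hA : IsLRep G L A) {g : ℕ → F}
    (hg : ∀ m, g m = 0 ↔ m ∈ L) :
    minRank F Gᶜ ≤ (intersectionMatrix A g).rank := by
  refine Nat.sInf_le ⟨_, isSymm_intersectionMatrix A g, fun u v huv => ?_, rfl⟩
  rw [intersectionMatrix, of_apply, SimpleGraph.compl_adj, hA u v huv, ne_eq, hg]
  exact ⟨fun h => ⟨huv, h⟩, And.right⟩

variable [Fintype α] (K : Type*) [Field K]

def inclusionMatrix (A : V → Finset α) (t : ℕ) : Matrix V {T : Finset α // #T = t} K :=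
  of fun v T => if T.1 ⊆ A v then 1 else 0

variable {K}

lemma inclusionMatrix_mul_transpose (A : V → Finset α) (t : ℕ) :
    inclusionMatrix K A t * (inclusionMatrix K A t)ᵀ =
      intersectionMatrix A fun m => (m.choose t : K) := by
  ext u v
  simp only [mul_apply, transpose_apply, inclusionMatrix, intersectionMatrix, of_apply, mul_ite,
    mul_one, mul_zero]
  rw [Fintype.sum_subtype_card_eq t
    fun T => if T ⊆ A v then if T ⊆ A u then (1 : K) else 0 else 0, ← card_powersetCard]
  simp_rw [← ite_and, sum_boole]
  congr 2
  ext T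
  simp only [mem_filter, mem_powersetCard, subset_univ, true_and, subset_inter_iff]
  tauto

lemma inclusionMatrix_mul_inclusionMatrix_val {A : V → Finset α} {k s t : ℕ}
    (hA : ∀ v, #(A v) = k) (hts : t ≤ s) :
    inclusionMatrix K A s * inclusionMatrix K (Subtype.val : {S : Finset α // #S = s} → _) t =
      ((k - t).choose (s - t) : K) • inclusionMatrix K A t := by
  ext v ⟨T, rfl⟩
  simp only [mul_apply, inclusionMatrix, of_apply, Matrix.smul_apply, smul_eq_mul, mul_ite,
    mul_one, mul_zero]
  rw [Fintype.sum_subtype_card_eq s fun S => if T ⊆ S then if S ⊆ A v then (1 : K) else 0 else 0]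
  simp_rw [← ite_and, sum_boole]
  have hfilter : ({S ∈ powersetCard s univ | T ⊆ S ∧ S ⊆ A v} : Finset (Finset α)) =
      {S ∈ powersetCard s (A v) | T ⊆ S} := by
    ext S
    simp only [mem_filter, mem_powersetCard, subset_univ, true_and]
    tauto
  rw [hfilter]
  split_ifs with hTA
  · rw [card_filter_superset_powersetCard hTA hts, hA]
  · rw [filter_eq_empty_iff.2 fun S hS hTS => hTA (hTS.trans (mem_powersetCard.1 hS).1),
      card_empty, Nat.cast_zero]

variable [CharZero K]

lemma exists_intersectionMatrix_choose_eq_inclusionMatrix_mul {A : V → Finset α} {k s t : ℕ}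
    (hA : ∀ v, #(A v) = k) (hsk : s ≤ k) (hts : t ≤ s) :
    ∃ Q : Matrix {S : Finset α // #S = s} V K,
      intersectionMatrix A (fun m => (m.choose t : K)) = inclusionMatrix K A s * Q := by
  have hc : ((k - t).choose (s - t) : K) ≠ 0 := Nat.cast_ne_zero.2 (Nat.choose_pos (by omega)).ne'
  refine ⟨((k - t).choose (s - t) : K)⁻¹ •
    (inclusionMatrix K (Subtype.val : {S : Finset α // #S = s} → _) t *
      (inclusionMatrix K A t)ᵀ), ?_⟩
  rw [Matrix.mul_smul, ← Matrix.mul_assoc, inclusionMatrix_mul_inclusionMatrix_val hA hts,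
    Matrix.smul_mul, smul_smul, inv_mul_cancel₀ hc, one_smul, inclusionMatrix_mul_transpose]

theorem rank_intersectionMatrix_le_choose [Fintype V] {A : V → Finset α} {k s : ℕ}
    (hA : ∀ v, #(A v) = k) (hsk : s ≤ k) {g : ℕ → K} (hg : g ∈ binomialSpan K s) :
    (intersectionMatrix A g).rank ≤ (Fintype.card α).choose s := by
  obtain ⟨Q, hQ⟩ : ∃ Q : Matrix {S : Finset α // #S = s} V K,
      intersectionMatrix A g = inclusionMatrix K A s * Q := by
    induction hg using Submodule.span_induction with
    | mem g hg =>
      obtain ⟨t, ht, rfl⟩ := hg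
      exact exists_intersectionMatrix_choose_eq_inclusionMatrix_mul hA hsk ht
    | zero => exact ⟨0, by ext; simp [intersectionMatrix]⟩
    | add g₁ g₂ _ _ h₁ h₂ =>
      obtain ⟨Q₁, hQ₁⟩ := h₁
      obtain ⟨Q₂, hQ₂⟩ := h₂
      exact ⟨Q₁ + Q₂, by rw [Matrix.mul_add, ← hQ₁, ← hQ₂]; ext; simp [intersectionMatrix]⟩
    | smul c g _ h =>
      obtain ⟨Q, hQ⟩ := h
      exact ⟨c • Q, by rw [Matrix.mul_smul, ← hQ]; ext; simp [intersectionMatrix]⟩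
  rw [hQ]
  calc (inclusionMatrix K A s * Q).rank ≤ (inclusionMatrix K A s).rank := rank_mul_le_left _ _
    _ ≤ Fintype.card {T : Finset α // #T = s} := rank_le_card_width _
    _ = (Fintype.card α).choose s := Fintype.card_finset_len s

end IntersectionMatrix

section Reduction

variable {ι m : Type*} {p : ℕ} [Fact p.Prime]

theorem linearIndependent_int_of_zmod {v : ι → m → ℤ}
    (hv : LinearIndependent (ZMod p) fun i j => (v i j : ZMod p)) : LinearIndependent ℤ v := by
  rw [linearIndependent_iff'] at hv ⊢
  have hp : (p : ℤ) ≠ 0 := by exact_mod_cast (Fact.out : p.Prime).ne_zero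
  have hdvd : ∀ n : ℕ, ∀ (s : Finset ι) (g : ι → ℤ), ∑ i ∈ s, g i • v i = 0 →
      ∀ i ∈ s, (p : ℤ) ^ n ∣ g i := by
    intro n
    induction n with
    | zero => simp
    | succ n ih =>
      intro s g hg i hi
      have hpg : ∀ i ∈ s, (p : ℤ) ∣ g i := by
        refine fun i hi => (ZMod.intCast_zmod_eq_zero_iff_dvd _ p).1 (hv s (fun i => g i) ?_ i hi)
        funext j
        simpa using congrArg (Int.cast : ℤ → ZMod p) (congrFun hg j)
      have hg' : ∑ i ∈ s, (g i / p) • v i = 0 := by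
        refine (smul_right_injective _ hp) ?_
        simp only [smul_sum, smul_smul, smul_zero]
        rwa [sum_congr rfl fun i hi => by rw [Int.mul_ediv_cancel' (hpg i hi)]]
      rw [← Int.mul_ediv_cancel' (hpg i hi), pow_succ']
      exact mul_dvd_mul_left _ (ih s _ hg' i hi)
  intro s g hg i hi
  by_contra hgi
  have := Int.natAbs_le_of_dvd_ne_zero (hdvd (g i).natAbs s g hg i hi) hgi
  rw [Int.natAbs_pow, Int.natAbs_natCast] at this
  exact (Nat.lt_pow_self (Fact.out : p.Prime).one_lt).not_ge this

theorem linearIndependent_rat_of_zmod {v : ι → m → ℤ}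
    (hv : LinearIndependent (ZMod p) fun i j => (v i j : ZMod p)) :
    LinearIndependent ℚ fun i j => (v i j : ℚ) := by
  rw [← LinearIndependent.iff_fractionRing ℤ ℚ]
  exact (linearIndependent_int_of_zmod hv).map'
    ((Int.castRingHom ℚ).toIntAlgHom.toLinearMap.compLeft m)
    (LinearMap.ker_eq_bot.2 fun x y h => funext fun j => Int.cast_injective (congrFun h j))

theorem rank_map_intCast_zmod_le_rank_map_intCast_rat [Fintype m] {n : Type*} [Fintype n]
    (M : Matrix m n ℤ) :
    (M.map (Int.cast : ℤ → ZMod p)).rank ≤ (M.map (Int.cast : ℤ → ℚ)).rank := by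
  obtain ⟨κ, a, ha, hspan, hli⟩ :=
    exists_linearIndependent' (ZMod p) (M.map (Int.cast : ℤ → ZMod p)).row
  have : Finite κ := Finite.of_injective a ha
  have : Fintype κ := Fintype.ofFinite κ
  have hQ : LinearIndependent ℚ ((M.map (Int.cast : ℤ → ℚ)).submatrix a id).row :=
    linearIndependent_rat_of_zmod hli
  calc (M.map (Int.cast : ℤ → ZMod p)).rank = Fintype.card κ := by
        rw [rank_eq_finrank_span_row, ← hspan, finrank_span_eq_card hli]
    _ = ((M.map (Int.cast : ℤ → ℚ)).submatrix a id).rank := hQ.rank_matrix.symm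
    _ ≤ (M.map (Int.cast : ℤ → ℚ)).rank := rank_submatrix_le _ a id

end Reduction

theorem minRank_compl_le_choose_thetaLk_general {V : Type*} [Fintype V]
    (p : ℕ) [hp : Fact p.Prime] (R : Finset (ZMod p)) (s : ℕ) (hR : R.card = s)
    (L : Set ℕ) (hL : L = {m : ℕ | (m : ZMod p) ∈ R})
    (k : ℕ) (hks : s ≤ k)
    (G : SimpleGraph V) (hrep : ∃ l, HasUnifLRep G L k l) :
    minRank (ZMod p) Gᶜ ≤ (thetaLk G L k).choose s := by
  obtain ⟨A, hA, hArep⟩ : HasUnifLRep G L k (thetaLk G L k) := Nat.sInf_mem hrep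
  let g : ℕ → ℤ := fun m => ∏ r ∈ R, ((m : ℤ) - r.val)
  have hg_zmod : ∀ m, ((g m : ℤ) : ZMod p) = 0 ↔ m ∈ L := fun m => by
    simp [g, hL, prod_eq_zero_iff, sub_eq_zero]
  have hg_rat : (Int.cast ∘ g : ℕ → ℚ) ∈ binomialSpan ℚ s := by
    simpa [g, Function.comp_def, ← hR] using prod_sub_mem_binomialSpan R fun r => (r.val : ℚ)
  calc minRank (ZMod p) Gᶜ ≤ (intersectionMatrix A (Int.cast ∘ g : ℕ → ZMod p)).rank :=
        minRank_compl_le_rank_intersectionMatrix hArep hg_zmod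
    _ ≤ (intersectionMatrix A (Int.cast ∘ g : ℕ → ℚ)).rank :=
        rank_map_intCast_zmod_le_rank_map_intCast_rat (intersectionMatrix A g)
    _ ≤ (thetaLk G L k).choose s := by
        simpa using rank_intersectionMatrix_le_choose hA hks hg_rat

/-- Let `p` be a prime, `R` a set of residues mod `p` with `|R| = s ≥ 1`,
`L = {l ≥ 0 : l mod p ∈ R}`, and `k ≥ s`. Then every finite simple graph `G` admitting a
`k`-uniform `L`-intersection representation satisfies `mr_{ℤ_p}(Gᶜ) ≤ C(Θ_{L,k}(G), s)`. -/
theorem minRank_compl_le_choose_thetaLk {V : Type*} [Fintype V]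
    (p : ℕ) [hp : Fact p.Prime] (R : Finset (ZMod p)) (s : ℕ) (hs : 1 ≤ s) (hR : R.card = s)
    (L : Set ℕ) (hL : L = {m : ℕ | (m : ZMod p) ∈ R})
    (k : ℕ) (hks : s ≤ k)
    (G : SimpleGraph V) (hrep : ∃ l, HasUnifLRep G L k l) :
    minRank (ZMod p) Gᶜ ≤ (thetaLk G L k).choose s :=
  minRank_compl_le_choose_thetaLk_general p (hp := hp) R s hR L hL k hks G hrep
end
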